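/- For every integer n ≥ 2, every t > 0 and every r > 0, the Gruet kernels satisfy Milson's recursion p_{n+2}(t,r) = -(e^{-n t/2} / (2π sinh(r))) · ∂p_n/∂r (t,r); in particular r ↦ p_n(t,r) is differentiable on (0,∞) with derivative -2π e^{n t/2} sinh(r) p_{n+2}(t,r). -/

import Mathlib

open Real MeasureTheory

/-!
The radius `r` enters `p_n(t,r)` only through the factor `(cosh b + cosh r)^(-(n+1)/2)`, whose
`r`-derivative is `-(n+1)/2 · sinh r · (cosh b + cosh r)^(-(n+3)/2)`, the corresponding factor of
`p_{n+2}`. The rest of the integrand is dominated by a Gaussian in `b` and the factor is bounded by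
`1`, so one may differentiate under the integral sign. The constants then match through
`Γ((n+3)/2) = (n+1)/2 · Γ((n+1)/2)`, `(2π)^((n+2)/2) = 2π (2π)^(n/2)` and
`-(n+1)^2 t/8 + n t/2 = -(n-1)^2 t/8`.
-/

/-- The Gruet kernel `p_n(t,r)` for the heat semigroup on hyperbolic space `ℍ^n`. -/
noncomputable def gruet (n : ℕ) (t r : ℝ) : ℝ :=
  Real.exp (-((n : ℝ) - 1) ^ 2 * t / 8) / (π * (2 * π) ^ ((n : ℝ) / 2) * Real.sqrt t) *
    Real.Gamma (((n : ℝ) + 1) / 2) *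
    ∫ b in Set.Ioi (0 : ℝ),
      Real.exp ((π ^ 2 - b ^ 2) / (2 * t)) * Real.sinh b * Real.sin (π * b / t) /
        (Real.cosh b + Real.cosh r) ^ (((n : ℝ) + 1) / 2)

lemma integrable_exp_neg_mul_sq_add_mul_add {a : ℝ} (ha : 0 < a) (c d : ℝ) :
    Integrable (fun x : ℝ => exp (-a * x ^ 2 + c * x + d)) := by
  refine (integrable_cexp_quadratic (b := a) (by simpa using ha) c d).norm.congr
    (ae_of_all _ fun x => ?_)
  dsimp only
  rw [Complex.norm_exp]
  norm_cast

lemma one_le_cosh_add_cosh (b x : ℝ) : 1 ≤ cosh b + cosh x := by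
  linarith [one_le_cosh b, cosh_pos x]

section CoshKernel

variable {μ : Measure ℝ} {g : ℝ → ℝ}

lemma abs_div_cosh_add_cosh_rpow_le (c b x : ℝ) {s : ℝ} (hs : 0 ≤ s) :
    |c / (cosh b + cosh x) ^ s| ≤ |c| := by
  have hden : 1 ≤ (cosh b + cosh x) ^ s := one_le_rpow (one_le_cosh_add_cosh b x) hs
  rw [abs_div, abs_of_pos (zero_lt_one.trans_le hden)]
  exact div_le_self (abs_nonneg c) hden

lemma MeasureTheory.Integrable.div_cosh_add_cosh_rpow (hg : Integrable g μ) {s : ℝ} (hs : 0 ≤ s)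
    (x : ℝ) : Integrable (fun b => g b / (cosh b + cosh x) ^ s) μ := by
  have hden : Continuous fun b => (cosh b + cosh x) ^ s :=
    (continuous_cosh.add continuous_const).rpow_const fun _ => Or.inr hs
  refine hg.norm.mono' (hg.aestronglyMeasurable.div₀ hden.aestronglyMeasurable)
    (ae_of_all _ fun b => ?_)
  exact abs_div_cosh_add_cosh_rpow_le (g b) b x hs

lemma hasDerivAt_div_cosh_add_cosh_rpow (c b s x : ℝ) :
    HasDerivAt (fun x => c / (cosh b + cosh x) ^ s)
      (-(s * sinh x) * (c / (cosh b + cosh x) ^ (s + 1))) x := by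
  have hpos : 0 < cosh b + cosh x := add_pos (cosh_pos b) (cosh_pos x)
  have hrpow := ((hasDerivAt_cosh x).const_add (cosh b)).rpow_const (p := -s) (Or.inl hpos.ne')
  have heq : (fun y => c / (cosh b + cosh y) ^ s) = fun y => c * (cosh b + cosh y) ^ (-s) := by
    funext y
    rw [rpow_neg (add_pos (cosh_pos b) (cosh_pos y)).le, div_eq_mul_inv]
  rw [heq]
  refine (hrpow.const_mul c).congr_deriv ?_
  rw [show -s - 1 = -(s + 1) by ring, rpow_neg hpos.le]
  ring

theorem hasDerivAt_integral_div_cosh_add_cosh_rpow (hg : Integrable g μ) {s : ℝ} (hs : 0 ≤ s)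
    (r : ℝ) :
    HasDerivAt (fun x => ∫ b, g b / (cosh b + cosh x) ^ s ∂μ)
      (-(s * sinh r) * ∫ b, g b / (cosh b + cosh r) ^ (s + 1) ∂μ) r := by
  have hs1 : 0 ≤ s + 1 := by linarith
  have hbound : ∀ x ∈ Metric.ball r 1, ∀ b,
      ‖-(s * sinh x) * (g b / (cosh b + cosh x) ^ (s + 1))‖ ≤ s * sinh (|r| + 1) * |g b| := by
    intro x hx b
    have hx' : |x| ≤ |r| + 1 := by
      have := abs_sub_abs_le_abs_sub x r
      rw [Metric.mem_ball, dist_eq] at hx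
      linarith
    have hsinh : |sinh x| ≤ sinh (|r| + 1) := by rwa [abs_sinh, sinh_le_sinh]
    have hsinh_nonneg : 0 ≤ sinh (|r| + 1) := sinh_nonneg_iff.2 (by positivity)
    rw [norm_eq_abs, abs_mul, abs_neg, abs_mul, abs_of_nonneg hs]
    exact mul_le_mul (mul_le_mul_of_nonneg_left hsinh hs)
      (abs_div_cosh_add_cosh_rpow_le (g b) b x hs1) (abs_nonneg _) (by positivity)
  have h := hasDerivAt_integral_of_dominated_loc_of_deriv_le (μ := μ) (x₀ := r)
    (Metric.ball_mem_nhds r one_pos)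
    (Filter.Eventually.of_forall fun x => (hg.div_cosh_add_cosh_rpow hs x).aestronglyMeasurable)
    (hg.div_cosh_add_cosh_rpow hs r)
    ((hg.div_cosh_add_cosh_rpow hs1 r).const_mul _).aestronglyMeasurable
    (ae_of_all _ fun b x hx => hbound x hx b) (hg.abs.const_mul _)
    (ae_of_all _ fun b x _ => hasDerivAt_div_cosh_add_cosh_rpow (g b) b s x)
  simpa only [integral_const_mul] using h.2

end CoshKernel

noncomputable def gruetWeight (t b : ℝ) : ℝ :=
  exp ((π ^ 2 - b ^ 2) / (2 * t)) * sinh b * sin (π * b / t)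

noncomputable def gruetCoeff (n : ℕ) (t : ℝ) : ℝ :=
  exp (-((n : ℝ) - 1) ^ 2 * t / 8) / (π * (2 * π) ^ ((n : ℝ) / 2) * sqrt t) *
    Gamma (((n : ℝ) + 1) / 2)

lemma gruet_eq_gruetCoeff_mul_integral (n : ℕ) (t r : ℝ) :
    gruet n t r = gruetCoeff n t *
      ∫ b in Set.Ioi 0, gruetWeight t b / (cosh b + cosh r) ^ (((n : ℝ) + 1) / 2) :=
  rfl

lemma continuous_gruetWeight (t : ℝ) : Continuous (gruetWeight t) := by
  unfold gruetWeight
  fun_prop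

lemma abs_gruetWeight_le (t : ℝ) {b : ℝ} (hb : 0 ≤ b) :
    |gruetWeight t b| ≤ exp ((π ^ 2 - b ^ 2) / (2 * t) + b) := by
  have hsinh : |sinh b| ≤ exp b := by
    rw [abs_of_nonneg (sinh_nonneg_iff.2 hb), sinh_eq]
    linarith [exp_pos b, exp_pos (-b)]
  calc |gruetWeight t b|
      ≤ exp ((π ^ 2 - b ^ 2) / (2 * t)) * exp b * 1 := by
        rw [gruetWeight, abs_mul, abs_mul, abs_of_pos (exp_pos _)]
        gcongr
        exact abs_sin_le_one _
    _ = exp ((π ^ 2 - b ^ 2) / (2 * t) + b) := by rw [mul_one, exp_add]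

lemma integrableOn_gruetWeight {t : ℝ} (ht : 0 < t) :
    IntegrableOn (gruetWeight t) (Set.Ioi 0) := by
  refine (integrable_exp_neg_mul_sq_add_mul_add (a := 1 / (2 * t)) (by positivity) 1
    (π ^ 2 / (2 * t))).integrableOn.mono' (continuous_gruetWeight t).aestronglyMeasurable ?_
  filter_upwards [ae_restrict_mem measurableSet_Ioi] with b hb
  exact (abs_gruetWeight_le t (le_of_lt hb)).trans_eq (by ring_nf)

lemma gruetCoeff_mul (n : ℕ) (t : ℝ) :
    gruetCoeff n t * (((n : ℝ) + 1) / 2) =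
      2 * π * exp ((n : ℝ) * t / 2) * gruetCoeff (n + 2) t := by
  have hGamma :
      Gamma (((n + 2 : ℕ) + 1) / 2 : ℝ) = ((n : ℝ) + 1) / 2 * Gamma (((n : ℝ) + 1) / 2) := by
    rw [← Gamma_add_one (by positivity)]; push_cast; ring_nf
  have hpow : (2 * π) ^ (((n + 2 : ℕ) : ℝ) / 2) = (2 * π) ^ ((n : ℝ) / 2) * (2 * π) := by
    rw [← rpow_add_one (by positivity)]; push_cast; ring_nf
  have hexp : exp ((n : ℝ) * t / 2) * exp (-(((n + 2 : ℕ) : ℝ) - 1) ^ 2 * t / 8)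
      = exp (-((n : ℝ) - 1) ^ 2 * t / 8) := by
    rw [← exp_add]; push_cast; ring_nf
  rw [gruetCoeff, gruetCoeff, hGamma, hpow, ← hexp]
  have hpow_pos : (0 : ℝ) < (2 * π) ^ ((n : ℝ) / 2) := by positivity
  rcases (sqrt_nonneg t).eq_or_lt with hsqrt | hsqrt
  · simp [← hsqrt] -- both sides are divisions by `√t = 0`
  · field_simp

theorem hasDerivAt_gruet (n : ℕ) {t : ℝ} (ht : 0 < t) (r : ℝ) :
    HasDerivAt (gruet n t) (-(2 * π) * exp ((n : ℝ) * t / 2) * sinh r * gruet (n + 2) t r) r := by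
  have h := (hasDerivAt_integral_div_cosh_add_cosh_rpow (integrableOn_gruetWeight ht)
    (s := ((n : ℝ) + 1) / 2) (by positivity) r).const_mul (gruetCoeff n t)
  refine h.congr_deriv ?_
  have hs : (((n + 2 : ℕ) : ℝ) + 1) / 2 = ((n : ℝ) + 1) / 2 + 1 := by push_cast; ring
  rw [gruet_eq_gruetCoeff_mul_integral (n + 2), hs]
  linear_combination (-sinh r * ∫ b in Set.Ioi 0, gruetWeight t b /
    (cosh b + cosh r) ^ (((n : ℝ) + 1) / 2 + 1)) * gruetCoeff_mul n t

theorem milson_recursion_general (n : ℕ) (t r : ℝ) (ht : 0 < t) (hr : 0 < r) :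
    HasDerivAt (fun ρ => gruet n t ρ)
      (-(2 * π) * Real.exp ((n : ℝ) * t / 2) * Real.sinh r * gruet (n + 2) t r) r ∧
    gruet (n + 2) t r
      = -(Real.exp (-((n : ℝ) * t) / 2) / (2 * π * Real.sinh r))
          * deriv (fun ρ => gruet n t ρ) r := by
  have hderiv := hasDerivAt_gruet n ht r
  refine ⟨hderiv, ?_⟩
  have hsinh : sinh r ≠ 0 := (sinh_pos_iff.2 hr).ne'
  rw [hderiv.deriv, neg_div, exp_neg]
  field_simp

/-- Milson's recursion for the Gruet kernels: for every `n ≥ 2`, `t > 0` and `r > 0`,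
`p_{n+2}(t,r) = -(e^{-nt/2} / (2π sinh r)) ∂p_n/∂r(t,r)`, and `r ↦ p_n(t,r)` is
differentiable on `(0,∞)` with derivative `-2π e^{nt/2} sinh(r) p_{n+2}(t,r)`. -/
theorem milson_recursion (n : ℕ) (hn : 2 ≤ n) (t r : ℝ) (ht : 0 < t) (hr : 0 < r) :
    HasDerivAt (fun ρ => gruet n t ρ)
      (-(2 * π) * Real.exp ((n : ℝ) * t / 2) * Real.sinh r * gruet (n + 2) t r) r ∧
    gruet (n + 2) t r
      = -(Real.exp (-((n : ℝ) * t) / 2) / (2 * π * Real.sinh r))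
          * deriv (fun ρ => gruet n t ρ) r :=
  milson_recursion_general n t r ht hr
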